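/- Let r > 0 and let u, v : ℝ → ℝ be twice differentiable with u(t) > 0 and (u̇, v̇) ≠ (0,0) for all t, and write γ(t) = ψ(u(t), v(t)) = (x(t), y(t), z(t)). Then the geodesic curvature κ of γ in H²(r) satisfies the minimality condition for surfaces of revolution of elliptic type, κ(t) = (x ẏ − ẋ y)/(r z ‖γ̇‖), if and only if γ is an extrinsic catenary of elliptic type, i.e., (u,v) satisfies the Euler–Lagrange equations of ∫ f(u,v)‖γ̇‖ dt with f(u,v) = sinh(u/r). In particular, the generating curve of any minimal surface of revolution of elliptic type in H³(r) is an extrinsic catenary of elliptic type. -/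

import Mathlib

noncomputable section
open Real

/-- Minkowski inner product of `E₁³`. -/
def mink3 (X Y : ℝ × ℝ × ℝ) : ℝ := -(X.1 * Y.1) + X.2.1 * Y.2.1 + X.2.2 * Y.2.2

/-- Speed `‖γ̇‖ = √(−ẋ² + ẏ² + ż²)` of a curve `(x,y,z)` in `E₁³`. -/
def speed3 (x y z : ℝ → ℝ) (t : ℝ) : ℝ :=
  Real.sqrt (-(deriv x t) ^ 2 + (deriv y t) ^ 2 + (deriv z t) ^ 2)

/-- Geodesic curvature of the curve `(x,y,z)` in `H²(r)`. -/
def kappaH2 (r : ℝ) (x y z : ℝ → ℝ) (t : ℝ) : ℝ :=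
  -(x t * (deriv (deriv y) t * deriv z t - deriv y t * deriv (deriv z) t)
      - y t * (deriv (deriv x) t * deriv z t - deriv x t * deriv (deriv z) t)
      + z t * (deriv (deriv x) t * deriv y t - deriv x t * deriv (deriv y) t))
    / (r * (speed3 x y z t) ^ 3)

/-- First component of `γ(t) = ψ(u(t), v(t))` (semi-geodesic parametrization). -/
def gX (r : ℝ) (u v : ℝ → ℝ) (t : ℝ) : ℝ :=
  r * Real.cosh (u t / r) * Real.cosh (v t / r)

/-- Second component of `γ(t) = ψ(u(t), v(t))`. -/
def gY (r : ℝ) (u v : ℝ → ℝ) (t : ℝ) : ℝ :=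
  r * Real.cosh (u t / r) * Real.sinh (v t / r)

/-- Third component of `γ(t) = ψ(u(t), v(t))`. -/
def gZ (r : ℝ) (u v : ℝ → ℝ) (t : ℝ) : ℝ :=
  r * Real.sinh (u t / r)

/-- `‖γ̇‖` in semi-geodesic coordinates: `√(u̇² + cosh²(u/r) v̇²)`. -/
def speedSG (r : ℝ) (u v : ℝ → ℝ) (t : ℝ) : ℝ :=
  Real.sqrt ((deriv u t) ^ 2 + (Real.cosh (u t / r)) ^ 2 * (deriv v t) ^ 2)

/-- Geodesic curvature of `γ(t) = ψ(u(t), v(t))` in `H²(r)`. -/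
def kappaSG (r : ℝ) (u v : ℝ → ℝ) (t : ℝ) : ℝ :=
  kappaH2 r (gX r u v) (gY r u v) (gZ r u v) t

/-- The Euler–Lagrange equations of the functional `∫ f(u,v) ‖γ̇‖ dt` in
semi-geodesic coordinates. -/
def EulerLagrange (r : ℝ) (f : ℝ → ℝ → ℝ) (u v : ℝ → ℝ) : Prop :=
  ∀ t : ℝ,
    deriv (fun a => f a (v t)) (u t) * speedSG r u v t
        + f (u t) (v t) * Real.sinh (u t / r) * Real.cosh (u t / r) * (deriv v t) ^ 2
          / (r * speedSG r u v t)
      = deriv (fun s => f (u s) (v s) * deriv u s / speedSG r u v s) t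
    ∧ deriv (fun b => f (u t) b) (v t) * speedSG r u v t
      = deriv (fun s =>
          f (u s) (v s) * deriv v s * (Real.cosh (u s / r)) ^ 2 / speedSG r u v s) t

/-!
Write `s, c = sinh (u/r), cosh (u/r)`. In the frame `P = (cosh (v/r), sinh (v/r), 0)`,
`Q = (sinh (v/r), cosh (v/r), 0)`, `e₃`, of determinant `cosh² (v/r) - sinh² (v/r) = 1`, the curve
`γ = r c P + r s e₃` and its first two derivatives have coordinates that do not involve `v`.
Expanding the determinant gives `κ = N / (r ‖γ̇‖³)` with
`N = r c (ü v̇ - u̇ v̈) - s v̇ (2 u̇² + c² v̇²)`, and `x ẏ - ẋ y = r c² v̇`, so the minimality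
condition is `D = 0` for `D = c² v̇ ‖γ̇‖² - s N`. For `f = sinh (u/r)` the two Euler–Lagrange
expressions turn out to be `c v̇ D / (r ‖γ̇‖³)` and `-c u̇ D / (r ‖γ̇‖³)` (they are proportional
because the functional is invariant under reparametrization), so as `(u̇, v̇) ≠ 0` both vanish
exactly when `D = 0`.
-/

lemma deriv_sinh_div (r x : ℝ) : deriv (fun a => sinh (a / r)) x = cosh (x / r) / r := by
  rw [((hasDerivAt_id' x).div_const r).sinh.deriv, mul_one_div]

lemma speedSG_sq (r : ℝ) (u v : ℝ → ℝ) (t : ℝ) :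
    speedSG r u v t ^ 2 = deriv u t ^ 2 + cosh (u t / r) ^ 2 * deriv v t ^ 2 :=
  Real.sq_sqrt (by positivity)

section

variable {r : ℝ} {u v : ℝ → ℝ}

lemma hasDerivAt_cosh_div (hu : Differentiable ℝ u) (t : ℝ) :
    HasDerivAt (fun s => cosh (u s / r)) (sinh (u t / r) * (deriv u t / r)) t :=
  ((hu t).hasDerivAt.div_const r).cosh

lemma hasDerivAt_sinh_div (hu : Differentiable ℝ u) (t : ℝ) :
    HasDerivAt (fun s => sinh (u s / r)) (cosh (u t / r) * (deriv u t / r)) t :=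
  ((hu t).hasDerivAt.div_const r).sinh

lemma hasDerivAt_gX (hr : r ≠ 0) (hu : Differentiable ℝ u) (hv : Differentiable ℝ v) (t : ℝ) :
    HasDerivAt (gX r u v)
      (deriv u t * sinh (u t / r) * cosh (v t / r)
        + deriv v t * cosh (u t / r) * sinh (v t / r)) t :=
  (((hasDerivAt_cosh_div hu t).const_mul r).mul (hasDerivAt_cosh_div hv t)).congr_deriv
    (by field_simp)

lemma hasDerivAt_gY (hr : r ≠ 0) (hu : Differentiable ℝ u) (hv : Differentiable ℝ v) (t : ℝ) :
    HasDerivAt (gY r u v)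
      (deriv u t * sinh (u t / r) * sinh (v t / r)
        + deriv v t * cosh (u t / r) * cosh (v t / r)) t :=
  (((hasDerivAt_cosh_div hu t).const_mul r).mul (hasDerivAt_sinh_div hv t)).congr_deriv
    (by field_simp)

lemma hasDerivAt_gZ (hr : r ≠ 0) (hu : Differentiable ℝ u) (t : ℝ) :
    HasDerivAt (gZ r u v) (deriv u t * cosh (u t / r)) t :=
  ((hasDerivAt_sinh_div hu t).const_mul r).congr_deriv (by field_simp)

lemma hasDerivAt_deriv_gX (hr : r ≠ 0) (hu : Differentiable ℝ u) (hv : Differentiable ℝ v)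
    (hu2 : Differentiable ℝ (deriv u)) (hv2 : Differentiable ℝ (deriv v)) (t : ℝ) :
    HasDerivAt (deriv (gX r u v))
      ((deriv (deriv u) t * sinh (u t / r) + (deriv u t ^ 2 + deriv v t ^ 2) * cosh (u t / r) / r)
          * cosh (v t / r)
        + (2 * deriv u t * deriv v t * sinh (u t / r) / r + deriv (deriv v) t * cosh (u t / r))
          * sinh (v t / r)) t := by
  rw [show deriv (gX r u v) = _ from funext fun s => (hasDerivAt_gX hr hu hv s).deriv]
  exact ((((hu2 t).hasDerivAt.mul (hasDerivAt_sinh_div hu t)).mul (hasDerivAt_cosh_div hv t)).add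
    (((hv2 t).hasDerivAt.mul (hasDerivAt_cosh_div hu t)).mul (hasDerivAt_sinh_div hv t)))
    |>.congr_deriv (by simp only [Pi.mul_apply]; ring)

lemma hasDerivAt_deriv_gY (hr : r ≠ 0) (hu : Differentiable ℝ u) (hv : Differentiable ℝ v)
    (hu2 : Differentiable ℝ (deriv u)) (hv2 : Differentiable ℝ (deriv v)) (t : ℝ) :
    HasDerivAt (deriv (gY r u v))
      ((deriv (deriv u) t * sinh (u t / r) + (deriv u t ^ 2 + deriv v t ^ 2) * cosh (u t / r) / r)
          * sinh (v t / r)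
        + (2 * deriv u t * deriv v t * sinh (u t / r) / r + deriv (deriv v) t * cosh (u t / r))
          * cosh (v t / r)) t := by
  rw [show deriv (gY r u v) = _ from funext fun s => (hasDerivAt_gY hr hu hv s).deriv]
  exact ((((hu2 t).hasDerivAt.mul (hasDerivAt_sinh_div hu t)).mul (hasDerivAt_sinh_div hv t)).add
    (((hv2 t).hasDerivAt.mul (hasDerivAt_cosh_div hu t)).mul (hasDerivAt_cosh_div hv t)))
    |>.congr_deriv (by simp only [Pi.mul_apply]; ring)

lemma hasDerivAt_deriv_gZ (hr : r ≠ 0) (hu : Differentiable ℝ u)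
    (hu2 : Differentiable ℝ (deriv u)) (t : ℝ) :
    HasDerivAt (deriv (gZ r u v))
      (deriv (deriv u) t * cosh (u t / r) + deriv u t ^ 2 * sinh (u t / r) / r) t := by
  rw [show deriv (gZ r u v) = _ from funext fun s => (hasDerivAt_gZ (v := v) hr hu s).deriv]
  exact ((hu2 t).hasDerivAt.mul (hasDerivAt_cosh_div hu t)).congr_deriv (by ring)

lemma speedSG_pos {t : ℝ} (hreg : (deriv u t, deriv v t) ≠ (0, 0)) : 0 < speedSG r u v t := by
  refine Real.sqrt_pos.mpr ?_
  by_cases ha : deriv u t = 0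
  · have hb : deriv v t ≠ 0 := fun hb => hreg (by rw [ha, hb])
    rw [ha]
    positivity
  · positivity

lemma hasDerivAt_speedSG (hu : Differentiable ℝ u) (hu2 : Differentiable ℝ (deriv u))
    (hv2 : Differentiable ℝ (deriv v)) {t : ℝ} (hw : speedSG r u v t ≠ 0) :
    HasDerivAt (speedSG r u v)
      ((deriv u t * deriv (deriv u) t
        + cosh (u t / r) * sinh (u t / r) * deriv u t * deriv v t ^ 2 / r
        + cosh (u t / r) ^ 2 * deriv v t * deriv (deriv v) t) / speedSG r u v t) t := by
  have hq : HasDerivAt (fun s => deriv u s ^ 2 + cosh (u s / r) ^ 2 * deriv v s ^ 2)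
      (2 * deriv u t * deriv (deriv u) t
        + (2 * cosh (u t / r) * (sinh (u t / r) * (deriv u t / r)) * deriv v t ^ 2
          + cosh (u t / r) ^ 2 * (2 * deriv v t * deriv (deriv v) t))) t :=
    (((hu2 t).hasDerivAt.pow 2).add (((hasDerivAt_cosh_div hu t).pow 2).mul
      ((hv2 t).hasDerivAt.pow 2))).congr_deriv (by simp only [Pi.pow_apply]; ring)
  refine (hq.sqrt (fun h => hw (by rw [speedSG, h, Real.sqrt_zero]))).congr_deriv ?_
  rw [← speedSG]
  field_simp
  ring

lemma speed3_eq_speedSG (hr : r ≠ 0) (hu : Differentiable ℝ u) (hv : Differentiable ℝ v)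
    (t : ℝ) : speed3 (gX r u v) (gY r u v) (gZ r u v) t = speedSG r u v t := by
  rw [speed3, speedSG, (hasDerivAt_gX hr hu hv t).deriv, (hasDerivAt_gY hr hu hv t).deriv,
    (hasDerivAt_gZ hr hu t).deriv]
  congr 1
  linear_combination (deriv v t ^ 2 * cosh (u t / r) ^ 2 - deriv u t ^ 2 * sinh (u t / r) ^ 2)
      * cosh_sq_sub_sinh_sq (v t / r) + deriv u t ^ 2 * cosh_sq_sub_sinh_sq (u t / r)

lemma gX_mul_deriv_gY_sub_deriv_gX_mul_gY (hr : r ≠ 0) (hu : Differentiable ℝ u)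
    (hv : Differentiable ℝ v) (t : ℝ) :
    gX r u v t * deriv (gY r u v) t - deriv (gX r u v) t * gY r u v t
      = r * cosh (u t / r) ^ 2 * deriv v t := by
  rw [(hasDerivAt_gX hr hu hv t).deriv, (hasDerivAt_gY hr hu hv t).deriv, gX, gY]
  linear_combination r * cosh (u t / r) ^ 2 * deriv v t * cosh_sq_sub_sinh_sq (v t / r)

def kappaNumeratorSG (r : ℝ) (u v : ℝ → ℝ) (t : ℝ) : ℝ :=
  r * cosh (u t / r) * (deriv (deriv u) t * deriv v t - deriv u t * deriv (deriv v) t)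
    - sinh (u t / r) * deriv v t * (2 * deriv u t ^ 2 + cosh (u t / r) ^ 2 * deriv v t ^ 2)

lemma kappaSG_eq (hr : r ≠ 0) (hu : Differentiable ℝ u) (hv : Differentiable ℝ v)
    (hu2 : Differentiable ℝ (deriv u)) (hv2 : Differentiable ℝ (deriv v)) (t : ℝ) :
    kappaSG r u v t = kappaNumeratorSG r u v t / (r * speedSG r u v t ^ 3) := by
  rw [kappaSG, kappaH2, speed3_eq_speedSG hr hu hv,
    (hasDerivAt_deriv_gX hr hu hv hu2 hv2 t).deriv, (hasDerivAt_deriv_gY hr hu hv hu2 hv2 t).deriv,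
    (hasDerivAt_deriv_gZ hr hu hu2 t).deriv, (hasDerivAt_gX hr hu hv t).deriv,
    (hasDerivAt_gY hr hu hv t).deriv, (hasDerivAt_gZ hr hu t).deriv, gX, gY, gZ]
  congr 1
  unfold kappaNumeratorSG
  set a := deriv u t
  set b := deriv v t
  set A := deriv (deriv u) t
  set B := deriv (deriv v) t
  set s := sinh (u t / r)
  set c := cosh (u t / r)
  set K := r * c * (A * b - a * B) - 2 * a ^ 2 * b * s
  -- `(c² - s²) K - v̇³ c² s` is the determinant of the frame coordinates of `γ, γ̇, γ̈`
  linear_combination (norm := skip)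
    ((c ^ 2 - s ^ 2) * K - b ^ 3 * c ^ 2 * s) * cosh_sq_sub_sinh_sq (v t / r)
      + K * cosh_sq_sub_sinh_sq (u t / r)
  field_simp
  ring

def minimalDefect (r : ℝ) (u v : ℝ → ℝ) (t : ℝ) : ℝ :=
  cosh (u t / r) ^ 2 * deriv v t * speedSG r u v t ^ 2 - sinh (u t / r) * kappaNumeratorSG r u v t

lemma minimal_condition_iff_minimalDefect_eq_zero (hr : r ≠ 0) (hu : Differentiable ℝ u)
    (hv : Differentiable ℝ v) (hu2 : Differentiable ℝ (deriv u))
    (hv2 : Differentiable ℝ (deriv v)) {t : ℝ}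
    (hut : u t ≠ 0) (hw : speedSG r u v t ≠ 0) :
    kappaSG r u v t
        = (gX r u v t * deriv (gY r u v) t - deriv (gX r u v) t * gY r u v t)
          / (r * gZ r u v t * speed3 (gX r u v) (gY r u v) (gZ r u v) t)
      ↔ minimalDefect r u v t = 0 := by
  rw [kappaSG_eq hr hu hv hu2 hv2, gX_mul_deriv_gY_sub_deriv_gX_mul_gY hr hu hv,
    speed3_eq_speedSG hr hu hv, gZ, div_eq_div_iff (by positivity) (by positivity), ← sub_eq_zero]
  have key : kappaNumeratorSG r u v t * (r * (r * sinh (u t / r)) * speedSG r u v t)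
      - r * cosh (u t / r) ^ 2 * deriv v t * (r * speedSG r u v t ^ 3)
      = r ^ 2 * speedSG r u v t * -minimalDefect r u v t := by
    rw [minimalDefect]; ring
  rw [key, mul_eq_zero, or_iff_right (by positivity), neg_eq_zero]

lemma eulerLagrange_sinh_u_iff (hr : r ≠ 0) (hu : Differentiable ℝ u)
    (hu2 : Differentiable ℝ (deriv u)) (hv2 : Differentiable ℝ (deriv v)) {t : ℝ}
    (hw : speedSG r u v t ≠ 0) :
    deriv (fun a => sinh (a / r)) (u t) * speedSG r u v t
        + sinh (u t / r) * sinh (u t / r) * cosh (u t / r) * deriv v t ^ 2 / (r * speedSG r u v t)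
      = deriv (fun s => sinh (u s / r) * deriv u s / speedSG r u v s) t
      ↔ deriv v t * minimalDefect r u v t = 0 := by
  have hF : HasDerivAt (fun s => sinh (u s / r) * deriv u s / speedSG r u v s) _ t :=
    ((hasDerivAt_sinh_div hu t).mul (hu2 t).hasDerivAt).div (hasDerivAt_speedSG hu hu2 hv2 hw) hw
  have key : deriv (fun a => sinh (a / r)) (u t) * speedSG r u v t
        + sinh (u t / r) * sinh (u t / r) * cosh (u t / r) * deriv v t ^ 2 / (r * speedSG r u v t)
        - deriv (fun s => sinh (u s / r) * deriv u s / speedSG r u v s) t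
      = cosh (u t / r) * (deriv v t * minimalDefect r u v t) / (r * speedSG r u v t ^ 3) := by
    rw [deriv_sinh_div, hF.deriv, minimalDefect, kappaNumeratorSG]
    simp only [Pi.mul_apply]
    field_simp
    linear_combination (cosh (u t / r) * speedSG r u v t ^ 2
      - r * sinh (u t / r) * deriv (deriv u) t
      + sinh (u t / r) ^ 2 * cosh (u t / r) * deriv v t ^ 2) * speedSG_sq r u v t
  rw [← sub_eq_zero, key, div_eq_zero_iff, or_iff_left (by positivity), mul_eq_zero,
    or_iff_right (cosh_pos _).ne']

lemma eulerLagrange_sinh_v_iff (hr : r ≠ 0) (hu : Differentiable ℝ u)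
    (hu2 : Differentiable ℝ (deriv u)) (hv2 : Differentiable ℝ (deriv v)) {t : ℝ}
    (hw : speedSG r u v t ≠ 0) :
    deriv (fun _ => sinh (u t / r)) (v t) * speedSG r u v t
      = deriv (fun s => sinh (u s / r) * deriv v s * cosh (u s / r) ^ 2 / speedSG r u v s) t
      ↔ deriv u t * minimalDefect r u v t = 0 := by
  have hF : HasDerivAt
      (fun s => sinh (u s / r) * deriv v s * cosh (u s / r) ^ 2 / speedSG r u v s) _ t :=
    (((hasDerivAt_sinh_div hu t).mul (hv2 t).hasDerivAt).mul ((hasDerivAt_cosh_div hu t).pow 2)).div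
      (hasDerivAt_speedSG hu hu2 hv2 hw) hw
  have key : deriv (fun _ => sinh (u t / r)) (v t) * speedSG r u v t
        - deriv (fun s => sinh (u s / r) * deriv v s * cosh (u s / r) ^ 2 / speedSG r u v s) t
      = -(cosh (u t / r) * (deriv u t * minimalDefect r u v t)) / (r * speedSG r u v t ^ 3) := by
    rw [deriv_const, hF.deriv, minimalDefect, kappaNumeratorSG]
    simp only [Pi.mul_apply, Pi.pow_apply]
    field_simp
    linear_combination -(r * cosh (u t / r) ^ 2 * sinh (u t / r) * deriv (deriv v) t
      + 2 * cosh (u t / r) * deriv u t * deriv v t * sinh (u t / r) ^ 2) * speedSG_sq r u v t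
  rw [← sub_eq_zero, key, div_eq_zero_iff, or_iff_left (by positivity), neg_eq_zero, mul_eq_zero,
    or_iff_right (cosh_pos _).ne']

lemma eulerLagrange_sinh_iff_minimalDefect_eq_zero (hr : r ≠ 0) (hu : Differentiable ℝ u)
    (hu2 : Differentiable ℝ (deriv u)) (hv2 : Differentiable ℝ (deriv v))
    (hreg : ∀ t, (deriv u t, deriv v t) ≠ (0, 0)) :
    EulerLagrange r (fun a _ => sinh (a / r)) u v ↔ ∀ t, minimalDefect r u v t = 0 := by
  refine forall_congr' fun t => ?_
  have hw := (speedSG_pos (r := r) (hreg t)).ne'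
  rw [eulerLagrange_sinh_u_iff hr hu hu2 hv2 hw, eulerLagrange_sinh_v_iff hr hu hu2 hv2 hw]
  constructor
  · rintro ⟨hv_mul, hu_mul⟩
    by_contra hD
    exact hreg t (Prod.ext ((mul_eq_zero.mp hu_mul).resolve_right hD)
      ((mul_eq_zero.mp hv_mul).resolve_right hD))
  · intro hD
    simp [hD]

end

/-- minimality condition for elliptic surfaces of revolution holds iff
the generating curve is an extrinsic catenary of elliptic type. -/
theorem minimal_elliptic_iff_extrinsic_catenary (r : ℝ) (hr : 0 < r) (u v : ℝ → ℝ)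
    (hupos : ∀ t : ℝ, 0 < u t)
    (hu : Differentiable ℝ u) (hu2 : Differentiable ℝ (deriv u))
    (hv : Differentiable ℝ v) (hv2 : Differentiable ℝ (deriv v))
    (hreg : ∀ t : ℝ, (deriv u t, deriv v t) ≠ (0, 0)) :
    (∀ t : ℝ,
      kappaSG r u v t
        = (gX r u v t * deriv (gY r u v) t - deriv (gX r u v) t * gY r u v t)
          / (r * gZ r u v t * speed3 (gX r u v) (gY r u v) (gZ r u v) t)) ↔
      EulerLagrange r (fun a _ => Real.sinh (a / r)) u v := by
  rw [eulerLagrange_sinh_iff_minimalDefect_eq_zero hr.ne' hu hu2 hv2 hreg]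
  exact forall_congr' fun t => minimal_condition_iff_minimalDefect_eq_zero hr.ne' hu hv hu2 hv2
    (hupos t).ne' (speedSG_pos (hreg t)).ne'
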